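/- arXiv:2602.07203 — 6 statements merged into one kernel-verified Lean document; each statement's English description precedes it below -/
import Mathlib

section
/- Let S̄ ⊆ {1,…,d} be a closed set and let S̲ = ⌊S̄⌋ be its basis. Then for every j ∈ S̲, the set S̄ ∖ {j} is closed, i.e. ⌈S̄ ∖ {j}⌉ = S̄ ∖ {j}. -/
/-- Vertex type: `some i` is the feature vertex `i`, `none` is the target vertex `Y`. -/
abbrev Vtx (d : ℕ) := Option (Fin d)

/-- `PathTo E j p` means `p` is a directed path in the graph with edge relation `E`
from the feature vertex `j` to the target vertex `Y` (encoded as `none`). -/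
def PathTo {d : ℕ} (E : Vtx d → Vtx d → Prop) (j : Fin d) (p : List (Vtx d)) : Prop :=
  p.Chain' E ∧ p.head? = some (some j) ∧ p.getLast? = some none

open Classical in
/-- The basis `⌊S⌋` of `S`: all `j ∈ S` having a directed path to `Y`
whose only vertex in `S` is `j`. -/
noncomputable def bas {d : ℕ} (E : Vtx d → Vtx d → Prop) (S : Finset (Fin d)) :
    Finset (Fin d) :=
  S.filter fun j => ∃ p : List (Vtx d), PathTo E j p ∧ ∀ i ∈ S, some i ∈ p → i = j

open Classical in
/-- The closure `⌈S⌉` of `S`: all `j ∈ {1,…,d}` such that every directed path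
from `j` to `Y` contains a vertex of `S`. -/
noncomputable def clos {d : ℕ} (E : Vtx d → Vtx d → Prop) (S : Finset (Fin d)) :
    Finset (Fin d) :=
  Finset.univ.filter fun j => ∀ p : List (Vtx d), PathTo E j p → ∃ i ∈ S, some i ∈ p

section

variable {d : ℕ} {E : Vtx d → Vtx d → Prop}

theorem PathTo.start_mem {j : Fin d} {p : List (Vtx d)} (hp : PathTo E j p) : some j ∈ p :=
  List.mem_of_mem_head? hp.2.1

theorem mem_clos_iff {S : Finset (Fin d)} {k : Fin d} :
    k ∈ clos E S ↔ ∀ p, PathTo E k p → ∃ i ∈ S, some i ∈ p := by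
  simp [clos]

theorem subset_clos (S : Finset (Fin d)) : S ⊆ clos E S :=
  fun k hk => mem_clos_iff.2 fun _ hp => ⟨k, hk, hp.start_mem⟩

theorem clos_mono {S T : Finset (Fin d)} (hST : S ⊆ T) : clos E S ⊆ clos E T := fun _ hk =>
  mem_clos_iff.2 fun p hp =>
    let ⟨i, hiS, hip⟩ := mem_clos_iff.1 hk p hp
    ⟨i, hST hiS, hip⟩

/-- The path witnessing `j ∈ ⌊S⌋` meets `S` only in `j`, so it avoids `S ∖ {j}`. -/
theorem not_mem_clos_erase_of_mem_bas {S : Finset (Fin d)} {j : Fin d} (hj : j ∈ bas E S) :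
    j ∉ clos E (S.erase j) := by
  classical
  obtain ⟨-, p, hp, honly⟩ := Finset.mem_filter.1 hj
  intro hclos
  obtain ⟨i, hi, hip⟩ := mem_clos_iff.1 hclos p hp
  exact Finset.ne_of_mem_erase hi (honly i (Finset.mem_of_mem_erase hi) hip)

end

theorem stmt0_general (d : ℕ) (E : Vtx d → Vtx d → Prop)
    (S : Finset (Fin d)) (hclosed : clos E S = S)
    (j : Fin d) (hj : j ∈ bas E S) :
    clos E (S.erase j) = S.erase j := by
  refine subset_antisymm (fun k hk => Finset.mem_erase.2 ⟨?_, ?_⟩) (subset_clos _)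
  · rintro rfl
    exact not_mem_clos_erase_of_mem_bas hj hk
  · exact hclosed ▸ clos_mono (Finset.erase_subset j S) hk

/-- Lemma 1(1): removing a basis element from a closed set yields a closed set. -/
theorem stmt0 (d : ℕ) (E : Vtx d → Vtx d → Prop)
    (hacyc : ∀ v : Vtx d, ¬ Relation.TransGen E v v)
    (hY : ∀ v : Vtx d, ¬ E none v)
    (S : Finset (Fin d)) (hclosed : clos E S = S)
    (j : Fin d) (hj : j ∈ bas E S) :
    clos E (S.erase j) = S.erase j :=
  stmt0_general d E S hclosed j hj
end

section
/- Let S ⊆ {1,…,d} and let G' be the graph obtained from G by deleting every edge whose head lies in S. Then: (i) for every j ∈ S, j ∈ ⌊S⌋ if and only if there exists a directed path from j to Y in G'; and (ii) for every j ∈ {1,…,d}, j ∈ ⌈S⌉ if and only if j ∈ S or there is no directed path from j to Y in G'. -/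
lemma chain'_trans_aux {α} {E : α → α → Prop} :
    ∀ {l : List α} {a v : α}, (a :: l).Chain' E → v ∈ l → Relation.TransGen E a v := by
  intro l
  induction l with
  | nil => intro a v _ hv; simp at hv
  | cons b t ih =>
    intro a v h hv
    rw [List.Chain', List.isChain_cons_cons] at h
    rcases List.mem_cons.1 hv with rfl | hv
    · exact .single h.1
    · exact .head h.1 (ih h.2 hv)

lemma chain'_restrict_aux {α} {E : α → α → Prop} {P : α → Prop} :
    ∀ {l : List α} {a : α}, (a :: l).Chain' E → (∀ v ∈ l, P v) →
      (a :: l).Chain' (fun u v => E u v ∧ P v) := by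
  intro l
  induction l with
  | nil => intro a _ _; exact List.isChain_singleton _
  | cons b t ih =>
    intro a h hP
    rw [List.Chain', List.isChain_cons_cons] at h ⊢
    exact ⟨⟨h.1, hP b (.head t)⟩, ih h.2 fun v hv => hP v (.tail b hv)⟩

/-- Correctness of `FindClass`: basis and closure via the graph `G'` obtained by
deleting every edge whose head lies in `S`. -/
theorem stmt2 (d : ℕ) (E : Vtx d → Vtx d → Prop)
    (hacyc : ∀ v : Vtx d, ¬ Relation.TransGen E v v)
    (hY : ∀ v : Vtx d, ¬ E none v)
    (S : Finset (Fin d)) :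
    (∀ j ∈ S, (j ∈ bas E S ↔
        ∃ p : List (Vtx d), PathTo (fun u v => E u v ∧ ∀ i ∈ S, v ≠ some i) j p)) ∧
    (∀ j : Fin d, (j ∈ clos E S ↔ j ∈ S ∨
        ¬ ∃ p : List (Vtx d), PathTo (fun u v => E u v ∧ ∀ i ∈ S, v ≠ some i) j p)) := by
  classical
  constructor
  · intro j hj
    constructor
    · intro hb
      rw [bas, Finset.mem_filter] at hb
      obtain ⟨-, p, ⟨hc, hh, hl⟩, hS⟩ := hb
      cases p with
      | nil => simp at hh
      | cons a l =>
        simp only [List.head?_cons, Option.some.injEq] at hh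
        subst hh
        have hjl : (some j : Vtx d) ∉ l := fun hmem => hacyc _ (chain'_trans_aux hc hmem)
        refine ⟨some j :: l, chain'_restrict_aux hc ?_, rfl, hl⟩
        intro v hv i hi hvi
        have hij : i = j := hS i hi (by rw [← hvi]; exact List.mem_cons_of_mem _ hv)
        subst hij
        exact hjl (hvi ▸ hv)
    · rintro ⟨p, hc, hh, hl⟩
      rw [bas, Finset.mem_filter]
      refine ⟨hj, p, ⟨hc.imp fun a b h => h.1, hh, hl⟩, ?_⟩
      intro i hi hmem
      cases p with
      | nil => simp at hh
      | cons a l =>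
        simp only [List.head?_cons, Option.some.injEq] at hh
        subst hh
        rcases List.mem_cons.1 hmem with h | h
        · exact Option.some.inj h
        · obtain ⟨u, hu⟩ : ∃ u, E u (some i) ∧ ∀ k ∈ S, (some i : Vtx d) ≠ some k := by
            cases chain'_trans_aux hc h with
            | single h => exact ⟨_, h⟩
            | tail _ h => exact ⟨_, h⟩
          exact absurd rfl (hu.2 i hi)
  · intro j
    rw [clos, Finset.mem_filter]
    simp only [Finset.mem_univ, true_and]
    constructor
    · intro hcl
      by_cases hjS : j ∈ S
      · exact Or.inl hjS
      refine Or.inr ?_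
      rintro ⟨p, hc, hh, hl⟩
      obtain ⟨i, hi, hmem⟩ := hcl p ⟨hc.imp fun a b h => h.1, hh, hl⟩
      cases p with
      | nil => simp at hh
      | cons a l =>
        simp only [List.head?_cons, Option.some.injEq] at hh
        subst hh
        rcases List.mem_cons.1 hmem with h | h
        · exact hjS (Option.some.inj h ▸ hi)
        · obtain ⟨u, hu⟩ : ∃ u, E u (some i) ∧ ∀ k ∈ S, (some i : Vtx d) ≠ some k := by
            cases chain'_trans_aux hc h with
            | single h => exact ⟨_, h⟩
            | tail _ h => exact ⟨_, h⟩
          exact absurd rfl (hu.2 i hi)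
    · rintro (hjS | hnp) p ⟨hc, hh, hl⟩
      · cases p with
        | nil => simp at hh
        | cons a l =>
          simp only [List.head?_cons, Option.some.injEq] at hh
          subst hh
          exact ⟨j, hjS, List.mem_cons_self⟩
      · by_contra hno
        push_neg at hno
        apply hnp
        cases p with
        | nil => simp at hh
        | cons a l =>
          refine ⟨a :: l, chain'_restrict_aux hc ?_, hh, hl⟩
          intro v hv i hi hvi
          exact hno i hi (hvi ▸ List.mem_cons_of_mem _ hv)
end

section
/- Let S ⊆ {1,…,d} and let T be any set with ⌊S⌋ ⊆ T ⊆ ⌈S⌉. Then ⌊T⌋ = ⌊S⌋ and ⌈T⌉ = ⌈S⌉. -/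
lemma chain_transGen {α : Type*} {E : α → α → Prop} {a b : α} {l : List α}
    (h : List.Chain E a l) (hb : b ∈ l) : Relation.TransGen E a b := by
  induction l generalizing a with
  | nil => cases hb
  | cons c t ih =>
    cases h with
    | cons_cons hac hct =>
      rcases List.mem_cons.mp hb with rfl | hb'
      · exact Relation.TransGen.single hac
      · exact (Relation.TransGen.single hac).trans (ih hct hb')

lemma chain'_nodup {α : Type*} {E : α → α → Prop}
    (hacyc : ∀ v : α, ¬ Relation.TransGen E v v) {p : List α}
    (h : p.Chain' E) : p.Nodup := by
  induction p with
  | nil => simp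
  | cons a t ih =>
    have ht : List.Chain E a t := h
    refine List.nodup_cons.mpr ⟨fun hmem => ?_, ih h.tail⟩
    exact hacyc a (chain_transGen ht hmem)

lemma last_split {α : Type*} (P : α → Prop) [DecidablePred P] :
    ∀ (p : List α), (∃ x ∈ p, P x) →
      ∃ a x b, p = a ++ x :: b ∧ P x ∧ ∀ y ∈ b, ¬ P y := by
  intro p
  induction p with
  | nil => rintro ⟨x, hx, -⟩; cases hx
  | cons h t ih =>
    intro hex
    by_cases htS : ∃ x ∈ t, P x
    · rcases ih htS with ⟨a, x, b, rfl, hPx, hb⟩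
      exact ⟨h :: a, x, b, rfl, hPx, hb⟩
    · rcases hex with ⟨x, hx, hPx⟩
      rcases List.mem_cons.mp hx with rfl | hx'
      · exact ⟨[], x, t, rfl, hPx, fun y hy hPy => htS ⟨y, hy, hPy⟩⟩
      · exact absurd ⟨x, hx', hPx⟩ htS

lemma pathTo_of_split {d : ℕ} {E : Vtx d → Vtx d → Prop} {j : Fin d}
    {p a b : List (Vtx d)} {i : Fin d} (hp : PathTo E j p)
    (hsplit : p = a ++ (some i : Vtx d) :: b) : PathTo E i (some i :: b) := by
  obtain ⟨hc, hh, hl⟩ := hp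
  subst hsplit
  refine ⟨hc.right_of_append, rfl, ?_⟩
  rw [List.getLast?_append] at hl
  cases hb : (((some i : Vtx d) :: b)).getLast? with
  | none => simp at hb
  | some v => rw [hb] at hl; simpa [hb] using hl

lemma exists_bas {d : ℕ} (E : Vtx d → Vtx d → Prop) (S : Finset (Fin d))
    {j : Fin d} {p : List (Vtx d)} (hp : PathTo E j p)
    (hS : ∃ i ∈ S, (some i : Vtx d) ∈ p) :
    ∃ a i b, p = a ++ (some i : Vtx d) :: b ∧ i ∈ bas E S := by
  classical
  have hex : ∃ x ∈ p, ∃ k ∈ S, x = (some k : Vtx d) := by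
    rcases hS with ⟨i, hiS, hip⟩; exact ⟨some i, hip, i, hiS, rfl⟩
  rcases last_split (fun x => ∃ k ∈ S, x = (some k : Vtx d)) p hex with
    ⟨a, x, b, hsplit, ⟨k, hkS, rfl⟩, hb⟩
  refine ⟨a, k, b, hsplit, ?_⟩
  rw [bas, Finset.mem_filter]
  refine ⟨hkS, (some k : Vtx d) :: b, pathTo_of_split hp hsplit, ?_⟩
  intro m hmS hmem
  rcases List.mem_cons.mp hmem with hm | hm
  · exact Option.some_injective _ hm
  · exact absurd ⟨m, hmS, rfl⟩ (hb _ hm)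

lemma head_cons {d : ℕ} {E : Vtx d → Vtx d → Prop} {j : Fin d} {p : List (Vtx d)}
    (hp : PathTo E j p) : ∃ rest, p = (some j : Vtx d) :: rest := by
  obtain ⟨-, hh, -⟩ := hp
  cases p with
  | nil => simp at hh
  | cons a t =>
    simp [List.head?] at hh
    exact ⟨t, by rw [hh]⟩

/-- Any set between the basis and the closure of `S` has the same basis and closure. -/
theorem stmt3 (d : ℕ) (E : Vtx d → Vtx d → Prop)
    (hacyc : ∀ v : Vtx d, ¬ Relation.TransGen E v v)
    (hY : ∀ v : Vtx d, ¬ E none v)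
    (S T : Finset (Fin d)) (h1 : bas E S ⊆ T) (h2 : T ⊆ clos E S) :
    bas E T = bas E S ∧ clos E T = clos E S := by
  classical
  have hclosS : ∀ j ∈ T, ∀ p, PathTo E j p → ∃ i ∈ S, (some i : Vtx d) ∈ p := by
    intro j hj p hp
    have := h2 hj
    rw [clos, Finset.mem_filter] at this
    exact this.2 p hp
  constructor
  · -- bas E T = bas E S
    apply Finset.Subset.antisymm
    · -- bas T ⊆ bas S
      intro j hj
      rw [bas, Finset.mem_filter] at hj
      obtain ⟨hjT, p, hp, honly⟩ := hj
      obtain ⟨rest, hrest⟩ := head_cons hp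
      have hnd : p.Nodup := chain'_nodup hacyc hp.1
      have hjrest : (some j : Vtx d) ∉ rest := by
        rw [hrest] at hnd; exact (List.nodup_cons.mp hnd).1
      have hhit := hclosS j hjT p hp
      -- every S-vertex on p equals j
      have hSonly : ∀ k ∈ S, (some k : Vtx d) ∈ p → k = j := by
        intro k hkS hkp
        by_contra hkj
        have hkrest : (some k : Vtx d) ∈ rest := by
          rw [hrest] at hkp
          rcases List.mem_cons.mp hkp with hk | hk
          · exact absurd (Option.some_injective _ hk) hkj
          · exact hk
        rcases List.append_of_mem hkrest with ⟨a', b', hb'⟩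
        have hq : PathTo E k ((some k : Vtx d) :: b') :=
          pathTo_of_split (a := (some j : Vtx d) :: a') hp (by rw [hrest, hb']; rfl)
        rcases exists_bas E S hq ⟨k, hkS, List.mem_cons_self⟩ with
          ⟨a'', i', b'', hq2, hi'⟩
        have hi'T : i' ∈ T := h1 hi'
        have hi'q : (some i' : Vtx d) ∈ (some k : Vtx d) :: b' := by
          rw [hq2]; exact List.mem_append_right _ (List.mem_cons_self)
        have hi'p : (some i' : Vtx d) ∈ p := by
          rw [hrest, hb']
          rcases List.mem_cons.mp hi'q with h | h
          · simp [h]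
          · simp [h]
        have : i' = j := honly i' hi'T hi'p
        subst this
        rcases List.mem_cons.mp hi'q with h | h
        · exact hkj (Option.some_injective _ h.symm)
        · exact hjrest (by rw [hb']; exact List.mem_append_right _ (List.mem_cons_of_mem _ h))
      have hjS : j ∈ S := by
        rcases hhit with ⟨k, hkS, hkp⟩
        have := hSonly k hkS hkp
        rwa [this] at hkS
      rw [bas, Finset.mem_filter]
      exact ⟨hjS, p, hp, hSonly⟩
    · -- bas S ⊆ bas T
      intro j hj
      have hjT : j ∈ T := h1 hj
      rw [bas, Finset.mem_filter] at hj
      obtain ⟨hjS, p, hp, honly⟩ := hj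
      obtain ⟨rest, hrest⟩ := head_cons hp
      have hnd : p.Nodup := chain'_nodup hacyc hp.1
      have hjrest : (some j : Vtx d) ∉ rest := by
        rw [hrest] at hnd; exact (List.nodup_cons.mp hnd).1
      rw [bas, Finset.mem_filter]
      refine ⟨hjT, p, hp, ?_⟩
      intro i hiT hip
      by_contra hij
      have hirest : (some i : Vtx d) ∈ rest := by
        rw [hrest] at hip
        rcases List.mem_cons.mp hip with h | h
        · exact absurd (Option.some_injective _ h) hij
        · exact h
      rcases List.append_of_mem hirest with ⟨a', b', hb'⟩
      have hq : PathTo E i ((some i : Vtx d) :: b') :=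
        pathTo_of_split (a := (some j : Vtx d) :: a') hp (by rw [hrest, hb']; rfl)
      rcases hclosS i hiT _ hq with ⟨k, hkS, hkq⟩
      have hkp : (some k : Vtx d) ∈ p := by
        rw [hrest, hb']
        rcases List.mem_cons.mp hkq with h | h
        · simp [h]
        · simp [h]
      have hkj : k = j := honly k hkS hkp
      subst hkj
      rcases List.mem_cons.mp hkq with h | h
      · exact hij (Option.some_injective _ h.symm)
      · exact hjrest (by rw [hb']; exact List.mem_append_right _ (List.mem_cons_of_mem _ h))
  · -- clos E T = clos E S
    apply Finset.Subset.antisymm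
    · -- clos T ⊆ clos S
      intro j hj
      rw [clos, Finset.mem_filter] at hj ⊢
      refine ⟨Finset.mem_univ _, ?_⟩
      intro p hp
      rcases hj.2 p hp with ⟨i, hiT, hip⟩
      rcases List.append_of_mem hip with ⟨a, b, hab⟩
      have hq : PathTo E i ((some i : Vtx d) :: b) := pathTo_of_split hp hab
      rcases hclosS i hiT _ hq with ⟨k, hkS, hkq⟩
      refine ⟨k, hkS, ?_⟩
      rw [hab]
      exact List.mem_append_right _ hkq
    · -- clos S ⊆ clos T
      intro j hj
      rw [clos, Finset.mem_filter] at hj ⊢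
      refine ⟨Finset.mem_univ _, ?_⟩
      intro p hp
      rcases exists_bas E S hp (hj.2 p hp) with ⟨a, i, b, hsplit, hi⟩
      exact ⟨i, h1 hi, by rw [hsplit]; exact List.mem_append_right _ (List.mem_cons_self)⟩
end

section
/- Suppose the value function ν : P({1,…,d}) → ℝ satisfies ν(T) = ν(⌊T⌋) for every T ⊆ {1,…,d}. Then for every i ∈ {1,…,d}, the Shapley value satisfies φ_i = Σ_{U irreducible} ν(U) · w_i(U), where the sum is over all irreducible subsets U ⊆ {1,…,d} and w_i(U) = Σ_{T : U ⊆ T ⊆ ⌈U⌉} ( 1[i ∈ T] · p_{|T|−1} − 1[i ∉ T] · p_{|T|} ). -/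
section aux
variable {d : ℕ} {E : Vtx d → Vtx d → Prop}

lemma mem_bas {S : Finset (Fin d)} {j : Fin d} :
    j ∈ bas E S ↔ j ∈ S ∧ ∃ p : List (Vtx d), PathTo E j p ∧ ∀ i ∈ S, some i ∈ p → i = j := by
  simp only [bas, Finset.mem_filter]

lemma mem_clos {S : Finset (Fin d)} {j : Fin d} :
    j ∈ clos E S ↔ ∀ p : List (Vtx d), PathTo E j p → ∃ i ∈ S, some i ∈ p := by
  simp only [clos, Finset.mem_filter, Finset.mem_univ, true_and]

lemma chain_transGen_s7 {l : List (Vtx d)} {v w : Vtx d}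
    (h : List.Chain E v l) (hw : w ∈ l) : Relation.TransGen E v w := by
  induction l generalizing v with
  | nil => simp at hw
  | cons a l ih =>
    rcases List.chain_cons.mp h with ⟨hva, hal⟩
    rcases List.mem_cons.mp hw with rfl | hw
    · exact Relation.TransGen.single hva
    · exact Relation.TransGen.head hva (ih hal hw)

lemma path_destruct {p : List (Vtx d)} {j : Fin d} (hp : PathTo E j p) :
    ∃ rest, p = (some j : Vtx d) :: rest := by
  cases p with
  | nil => simp [PathTo] at hp
  | cons a l =>
    obtain ⟨-, h, -⟩ := hp
    simp only [List.head?_cons, Option.some.injEq] at h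
    exact ⟨l, by rw [h]⟩

lemma path_suffix {p : List (Vtx d)} (hc : p.Chain' E)
    (hl : p.getLast? = some none) {k : Fin d} (hk : (some k : Vtx d) ∈ p) :
    ∃ t, ((some k : Vtx d) :: t) <:+ p ∧ PathTo E k (some k :: t) := by
  obtain ⟨s, t, rfl⟩ := List.append_of_mem hk
  rw [List.getLast?_append_of_ne_nil _ (List.cons_ne_nil _ _)] at hl
  exact ⟨t, ⟨s, rfl⟩, hc.suffix ⟨s, rfl⟩, rfl, hl⟩

lemma exists_bas_on_path (T : Finset (Fin d)) :
    ∀ (n : ℕ) (p : List (Vtx d)) (k : Fin d), p.length ≤ n → PathTo E k p → k ∈ T →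
      ∃ m ∈ bas E T, (some m : Vtx d) ∈ p := by
  intro n
  induction n with
  | zero =>
    intro p k hlen hp _
    obtain ⟨rest, rfl⟩ := path_destruct hp
    simp at hlen
  | succ n ih =>
    intro p k hlen hp hk
    obtain ⟨rest, rfl⟩ := path_destruct hp
    by_cases hall : ∀ i ∈ T, (some i : Vtx d) ∈ (some k : Vtx d) :: rest → i = k
    · exact ⟨k, mem_bas.mpr ⟨hk, _, hp, hall⟩, List.mem_cons_self⟩
    · push_neg at hall
      obtain ⟨i, hiT, hip, hik⟩ := hall
      have hirest : (some i : Vtx d) ∈ rest := by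
        rcases List.mem_cons.mp hip with h | h
        · exact absurd (Option.some.inj h) hik
        · exact h
      have hrest_ne : rest ≠ [] := List.ne_nil_of_mem hirest
      have hlast : rest.getLast? = some none := by
        have := hp.2.2
        rwa [show (some k : Vtx d) :: rest = [some k] ++ rest from rfl,
          List.getLast?_append_of_ne_nil _ hrest_ne] at this
      obtain ⟨t, hsuf, hq⟩ := path_suffix (hp.1.tail) hlast hirest
      have hlen' : ((some i : Vtx d) :: t).length ≤ n := by
        have h1 := hsuf.length_le
        simp only [List.length_cons, List.length_tail] at hlen h1 ⊢
        omega
      obtain ⟨m, hm, hmp⟩ := ih _ i hlen' hq hiT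
      exact ⟨m, hm, List.mem_cons_of_mem _ (hsuf.subset hmp)⟩

lemma bas_subset (T : Finset (Fin d)) : bas E T ⊆ T := fun j hj => (mem_bas.mp hj).1

lemma bas_idem (T : Finset (Fin d)) : bas E (bas E T) = bas E T := by
  apply Finset.Subset.antisymm (bas_subset _)
  intro j hj
  have hj' := hj
  rw [mem_bas] at hj'
  obtain ⟨hjT, p, hp, hall⟩ := hj'
  rw [mem_bas]
  exact ⟨hj, p, hp, fun i hi hip => hall i (bas_subset T hi) hip⟩

lemma subset_clos_bas {T : Finset (Fin d)} : T ⊆ clos E (bas E T) := by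
  intro j hj
  rw [mem_clos]
  intro p hp
  obtain ⟨m, hm, hmp⟩ := exists_bas_on_path (E := E) T p.length p j le_rfl hp hj
  exact ⟨m, hm, hmp⟩

lemma bas_eq_iff (hacyc : ∀ v : Vtx d, ¬ Relation.TransGen E v v)
    {U T : Finset (Fin d)} (hU : bas E U = U) :
    bas E T = U ↔ U ⊆ T ∧ T ⊆ clos E U := by
  constructor
  · rintro rfl
    exact ⟨bas_subset T, subset_clos_bas⟩
  · rintro ⟨hUT, hTclos⟩
    apply Finset.Subset.antisymm
    · intro j hj
      rw [mem_bas] at hj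
      obtain ⟨hjT, p, hp, hall⟩ := hj
      have hjclos := hTclos hjT
      rw [mem_clos] at hjclos
      obtain ⟨u, huU, hup⟩ := hjclos p hp
      rwa [hall u (hUT huU) hup] at huU
    · intro j hj
      have hj' := hj
      rw [← hU, mem_bas] at hj'
      obtain ⟨hjU, p, hp, hallU⟩ := hj'
      rw [mem_bas]
      refine ⟨hUT hj, p, hp, fun k hkT hkp => ?_⟩
      by_contra hkj
      obtain ⟨rest, rfl⟩ := path_destruct hp
      have hkrest : (some k : Vtx d) ∈ rest := by
        rcases List.mem_cons.mp hkp with h | h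
        · exact absurd (Option.some.inj h) hkj
        · exact h
      have hrest_ne : rest ≠ [] := List.ne_nil_of_mem hkrest
      have hlast : rest.getLast? = some none := by
        have := hp.2.2
        rwa [show (some j : Vtx d) :: rest = [some j] ++ rest from rfl,
          List.getLast?_append_of_ne_nil _ hrest_ne] at this
      obtain ⟨t, hsuf, hq⟩ := path_suffix (hp.1.tail) hlast hkrest
      have hkclos := hTclos hkT
      rw [mem_clos] at hkclos
      obtain ⟨u, huU, huq⟩ := hkclos _ hq
      have huj : u = j :=
        hallU u huU (List.mem_cons_of_mem _ (hsuf.subset huq))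
      subst huj
      have hut : (some u : Vtx d) ∈ t := by
        rcases List.mem_cons.mp huq with h | h
        · exact absurd (Option.some.inj h) (Ne.symm hkj)
        · exact h
      have hjrest : (some u : Vtx d) ∈ rest :=
        hsuf.subset (List.mem_cons_of_mem _ hut)
      exact hacyc _ (chain_transGen_s7 hp.1 hjrest)

end aux

/-- The Shapley weight `p_ℓ = 1/(d ⬝ C(d-1, ℓ))`. -/
noncomputable def pShap (d ℓ : ℕ) : ℝ := 1 / ((d : ℝ) * ((d - 1).choose ℓ : ℝ))

/-- The Shapley value `φ_i = Σ_{S ⊆ [d] \ {i}} p_{|S|} (ν(S ∪ {i}) − ν(S))`. -/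
noncomputable def shapley {d : ℕ} (ν : Finset (Fin d) → ℝ) (i : Fin d) : ℝ :=
  ∑ S ∈ (Finset.univ.erase i).powerset, pShap d S.card * (ν (insert i S) - ν S)

/-- If the game is constant on equivalence classes (`ν(T) = ν(⌊T⌋)`), the Shapley
value is a weighted sum over irreducible sets. -/
theorem stmt7 (d : ℕ) (E : Vtx d → Vtx d → Prop)
    (hacyc : ∀ v : Vtx d, ¬ Relation.TransGen E v v)
    (hY : ∀ v : Vtx d, ¬ E none v)
    (ν : Finset (Fin d) → ℝ) (hν : ∀ T : Finset (Fin d), ν T = ν (bas E T))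
    (i : Fin d) :
    shapley ν i =
      ∑ U ∈ Finset.univ.powerset.filter (fun U : Finset (Fin d) => bas E U = U),
        ν U * ∑ T ∈ (clos E U).powerset.filter (fun T => U ⊆ T),
          ((if i ∈ T then pShap d (T.card - 1) else 0) -
           (if i ∉ T then pShap d T.card else 0)) := by
  classical
  set c : Finset (Fin d) → ℝ := fun T =>
    ((if i ∈ T then pShap d (T.card - 1) else 0) -
     (if i ∉ T then pShap d T.card else 0)) with hc
  -- Step A: RHS = ∑ over all T of ν T * c T
  have stepA : ∑ U ∈ Finset.univ.powerset.filter (fun U : Finset (Fin d) => bas E U = U),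
        ν U * ∑ T ∈ (clos E U).powerset.filter (fun T => U ⊆ T), c T
      = ∑ T ∈ (Finset.univ : Finset (Fin d)).powerset, ν T * c T := by
    have hmaps : ∀ T ∈ (Finset.univ : Finset (Fin d)).powerset,
        bas E T ∈ Finset.univ.powerset.filter (fun U : Finset (Fin d) => bas E U = U) := by
      intro T _
      rw [Finset.mem_filter, Finset.mem_powerset]
      exact ⟨Finset.subset_univ _, bas_idem T⟩
    rw [← Finset.sum_fiberwise_of_maps_to hmaps (fun T => ν T * c T)]
    apply Finset.sum_congr rfl
    intro U hU
    rw [Finset.mem_filter, Finset.mem_powerset] at hU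
    have hsets : Finset.filter (fun T => bas E T = U) (Finset.univ : Finset (Fin d)).powerset
        = (clos E U).powerset.filter (fun T => U ⊆ T) := by
      ext T
      rw [Finset.mem_filter, Finset.mem_filter, Finset.mem_powerset, Finset.mem_powerset,
        bas_eq_iff hacyc hU.2]
      constructor
      · rintro ⟨-, h1, h2⟩; exact ⟨h2, h1⟩
      · rintro ⟨h2, h1⟩; exact ⟨Finset.subset_univ _, h1, h2⟩
    rw [← hsets, Finset.mul_sum]
    apply Finset.sum_congr rfl
    intro T hT
    rw [Finset.mem_filter] at hT
    rw [hν T, hT.2]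
  rw [stepA]
  -- Step B: ∑ over all T of ν T * c T = shapley ν i
  have huniv : (Finset.univ : Finset (Fin d)) = insert i (Finset.univ.erase i) :=
    (Finset.insert_erase (Finset.mem_univ i)).symm
  have hdisj : Disjoint ((Finset.univ.erase i) : Finset (Fin d)).powerset
      (((Finset.univ.erase i) : Finset (Fin d)).powerset.image (insert i)) := by
    rw [Finset.disjoint_left]
    intro T hT hT'
    rw [Finset.mem_powerset] at hT
    obtain ⟨S, hS, rfl⟩ := Finset.mem_image.mp hT'
    exact (Finset.mem_erase.mp (hT (Finset.mem_insert_self i S))).1 rfl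
  have hinj : ∀ S ∈ ((Finset.univ.erase i) : Finset (Fin d)).powerset,
      ∀ S' ∈ ((Finset.univ.erase i) : Finset (Fin d)).powerset,
      insert i S = insert i S' → S = S' := by
    intro S hS S' hS' h
    rw [Finset.mem_powerset] at hS hS'
    have hiS : i ∉ S := fun h' => (Finset.mem_erase.mp (hS h')).1 rfl
    have hiS' : i ∉ S' := fun h' => (Finset.mem_erase.mp (hS' h')).1 rfl
    rw [← Finset.erase_insert hiS, ← Finset.erase_insert hiS', h]
  rw [huniv, Finset.powerset_insert, Finset.sum_union hdisj,
    Finset.sum_image hinj, shapley, ← Finset.sum_add_distrib]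
  apply Finset.sum_congr rfl
  intro S hS
  rw [Finset.mem_powerset] at hS
  have hiS : i ∉ S := fun h' => (Finset.mem_erase.mp (hS h')).1 rfl
  have h1 : c S = -(pShap d S.card) := by
    rw [hc]; simp [hiS]
  have h2 : c (insert i S) = pShap d S.card := by
    rw [hc]
    simp only [Finset.mem_insert_self, if_pos, not_true, if_neg,
      Finset.card_insert_of_notMem hiS]
    simp
  rw [h1, h2]
  ring
end

section
/- Suppose the value function ν : P({1,…,d}) → ℝ satisfies ν(T) = ν(⌊T⌋) for every T ⊆ {1,…,d}, and suppose i ∈ {1,…,d} has no directed path to Y in G. Then the Shapley value of i is zero: φ_i = 0. -/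
theorem PathTo.exists_of_mem {d : ℕ} {E : Vtx d → Vtx d → Prop} {j i : Fin d}
    {p : List (Vtx d)} (hp : PathTo E j p) (hi : some i ∈ p) : ∃ q, PathTo E i q := by
  obtain ⟨s, t, rfl⟩ := List.append_of_mem hi
  refine ⟨some i :: t, hp.1.suffix ⟨s, rfl⟩, rfl, ?_⟩
  rw [← hp.2.2, List.getLast?_append_cons]

theorem bas_insert_of_not_exists_pathTo {d : ℕ} {E : Vtx d → Vtx d → Prop} {i : Fin d}
    (hi : ¬ ∃ p, PathTo E i p) (S : Finset (Fin d)) : bas E (insert i S) = bas E S := by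
  ext j
  simp only [bas, Finset.mem_filter, Finset.mem_insert]
  constructor
  · rintro ⟨rfl | hj, p, hp, hall⟩
    · exact absurd ⟨p, hp⟩ hi
    · exact ⟨hj, p, hp, fun k hk => hall k (Or.inr hk)⟩
  · rintro ⟨hj, p, hp, hall⟩
    refine ⟨Or.inr hj, p, hp, ?_⟩
    rintro k (rfl | hk) hkp
    · exact absurd (hp.exists_of_mem hkp) hi
    · exact hall k hk hkp

theorem shapley_eq_zero_of_insert_eq {d : ℕ} {ν : Finset (Fin d) → ℝ} {i : Fin d}
    (hν : ∀ S, i ∉ S → ν (insert i S) = ν S) : shapley ν i = 0 := by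
  refine Finset.sum_eq_zero fun S hS => ?_
  have hiS : i ∉ S := fun h => by simpa using Finset.mem_powerset.mp hS h
  rw [hν S hiS, sub_self, mul_zero]

theorem stmt13_general (d : ℕ) (E : Vtx d → Vtx d → Prop)
    (ν : Finset (Fin d) → ℝ) (hν : ∀ T : Finset (Fin d), ν T = ν (bas E T))
    (i : Fin d) (hi : ¬ ∃ p : List (Vtx d), PathTo E i p) :
    shapley ν i = 0 :=
  shapley_eq_zero_of_insert_eq fun S _ => by
    rw [hν, bas_insert_of_not_exists_pathTo hi, ← hν]

/-- A feature with no directed path to `Y` has zero Shapley value. -/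
theorem stmt13 (d : ℕ) (E : Vtx d → Vtx d → Prop)
    (hacyc : ∀ v : Vtx d, ¬ Relation.TransGen E v v)
    (hY : ∀ v : Vtx d, ¬ E none v)
    (ν : Finset (Fin d) → ℝ) (hν : ∀ T : Finset (Fin d), ν T = ν (bas E T))
    (i : Fin d) (hi : ¬ ∃ p : List (Vtx d), PathTo E i p) :
    shapley ν i = 0 :=
  stmt13_general d E ν hν i hi
end

section
/- Let A ⊆ B ⊆ {1,…,d} and let ν : P({1,…,d}) → ℝ be the indicator game ν(S) = 1[A ⊆ S ⊆ B]. Then for every nonempty U ⊆ {1,…,d}, the Shapley interaction index satisfies: φ_U = (−1)^{|U ∩ ({1,…,d} ∖ B)|} · ω_{|A| − |B ∩ U|, |{1,…,d} ∖ (B ∪ U)|} if U ⊆ A ∪ ({1,…,d} ∖ B), and φ_U = 0 otherwise. -/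
/-- The interaction weight `p^u_s = 1/((d − u + 1) ⬝ C(d − u, s))`. -/
noncomputable def pInt (d u s : ℕ) : ℝ :=
  1 / (((d - u + 1 : ℕ) : ℝ) * ((d - u).choose s : ℝ))

/-- The discrete derivative `Δ_U(S) = Σ_{L ⊆ U} (−1)^{|U|−|L|} ν(S ∪ L)`. -/
noncomputable def discDeriv {d : ℕ} (ν : Finset (Fin d) → ℝ) (U S : Finset (Fin d)) : ℝ :=
  ∑ L ∈ U.powerset, (-1 : ℝ) ^ (U.card - L.card) * ν (S ∪ L)

/-- The Shapley interaction index `φ_U = Σ_{S ⊆ [d] \ U} Δ_U(S) ⬝ p^{|U|}_{|S|}`. -/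
noncomputable def interIdx {d : ℕ} (ν : Finset (Fin d) → ℝ) (U : Finset (Fin d)) : ℝ :=
  ∑ S ∈ (Finset.univ \ U).powerset, discDeriv ν U S * pInt d U.card S.card

/-- `ω_{a,b} = 1/((a + b + 1) ⬝ C(a + b, a))`. -/
noncomputable def omegaW (a b : ℕ) : ℝ :=
  1 / (((a + b + 1 : ℕ) : ℝ) * ((a + b).choose a : ℝ))

lemma omegaW_eq (a b : ℕ) :
    omegaW a b = (a.factorial : ℝ) * b.factorial / (a + b + 1).factorial := by
  have h := Nat.choose_mul_factorial_mul_factorial (Nat.le_add_right a b)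
  have hfact : ((a + b + 1).factorial : ℝ) = (a + b + 1) * (a + b).factorial := by
    rw [Nat.factorial_succ]; push_cast; ring
  have h2 : ((a+b).choose a : ℝ) * a.factorial * (a+b-a).factorial = (a+b).factorial := by
    exact_mod_cast congrArg (Nat.cast : ℕ → ℝ) h
  rw [Nat.add_sub_cancel_left] at h2
  have hc : ((a+b).choose a : ℝ) ≠ 0 := by
    exact_mod_cast Nat.choose_pos (Nat.le_add_right a b) |>.ne'
  have hfa : (a.factorial : ℝ) ≠ 0 := by exact_mod_cast a.factorial_ne_zero
  have hfb : (b.factorial : ℝ) ≠ 0 := by exact_mod_cast b.factorial_ne_zero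
  have hn : ((a + b + 1 : ℕ) : ℝ) ≠ 0 := by positivity
  rw [omegaW, hfact]
  field_simp
  rw [← h2]; push_cast; ring

lemma omegaW_rec (a b : ℕ) : omegaW a (b+1) + omegaW (a+1) b = omegaW a b := by
  rw [omegaW_eq, omegaW_eq, omegaW_eq]
  have h1 : (a + (b+1) + 1) = (a + b + 1) + 1 := by ring
  have h2 : ((a+1) + b + 1) = (a + b + 1) + 1 := by ring
  rw [h1, h2, Nat.factorial_succ (a+b+1), Nat.factorial_succ a, Nat.factorial_succ b]
  have hf : ((a+b+1).factorial : ℝ) ≠ 0 := by exact_mod_cast (a+b+1).factorial_ne_zero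
  have hn : ((a + b + 1 + 1 : ℕ) : ℝ) ≠ 0 := by positivity
  field_simp
  push_cast
  ring

lemma sum_choose_omegaW : ∀ (m a b : ℕ),
    ∑ k ∈ Finset.range (m+1), (m.choose k : ℝ) * omegaW (a+k) (b+(m-k)) = omegaW a b := by
  intro m
  induction m with
  | zero => intro a b; simp
  | succ m ih =>
    intro a b
    rw [Finset.sum_range_succ']
    have hsplit : ∀ i ∈ Finset.range (m+1),
        ((m+1).choose (i+1) : ℝ) * omegaW (a+(i+1)) (b+(m+1-(i+1)))
        = (m.choose i : ℝ) * omegaW ((a+1)+i) (b+(m-i))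
          + (m.choose (i+1) : ℝ) * omegaW (a+(i+1)) (b+(m+1-(i+1))) := by
      intro i hi
      rw [Nat.choose_succ_succ]
      push_cast
      have : a + (i+1) = (a+1) + i := by ring
      rw [this]
      ring
    rw [Finset.sum_congr rfl hsplit, Finset.sum_add_distrib, ih (a+1) b]
    have h2 : ∑ i ∈ Finset.range (m+1),
        (m.choose (i+1) : ℝ) * omegaW (a+(i+1)) (b+(m+1-(i+1)))
        + ((m+1).choose 0 : ℝ) * omegaW (a+0) (b+(m+1-0))
        = omegaW a (b+1) := by
      rw [Finset.sum_range_succ]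
      have hz : (m.choose (m+1) : ℝ) = 0 := by
        rw [Nat.choose_eq_zero_of_lt (by omega)]; simp
      rw [hz]
      rw [← ih a (b+1), Finset.sum_range_succ']
      have : ∀ i ∈ Finset.range m,
          (m.choose (i+1) : ℝ) * omegaW (a+(i+1)) ((b+1)+(m-(i+1)))
          = (m.choose (i+1) : ℝ) * omegaW (a+(i+1)) (b+(m+1-(i+1))) := by
        intro i hi
        simp only [Finset.mem_range] at hi
        congr 2
        omega
      rw [Finset.sum_congr rfl this]
      have hb : (b+1)+(m-0) = b+(m+1-0) := by omega
      rw [hb]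
      simp
    rw [add_assoc, h2, add_comm, omegaW_rec]

lemma sum_powerset_card {α : Type*} [DecidableEq α] (M : Finset α) (g : ℕ → ℝ) :
    ∑ T ∈ M.powerset, g T.card
      = ∑ k ∈ Finset.range (M.card + 1), (M.card.choose k : ℝ) * g k := by
  rw [Finset.sum_powerset]
  apply Finset.sum_congr rfl
  intro k _
  rw [Finset.sum_congr rfl (fun T hT => by rw [(Finset.mem_powersetCard.mp hT).2]),
    Finset.sum_const, Finset.card_powersetCard, nsmul_eq_mul]

lemma discDeriv_vanish {d : ℕ} (A B : Finset (Fin d)) (U S : Finset (Fin d)) (u0 : Fin d)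
    (hu0 : u0 ∈ U) (hB : u0 ∈ B) (hA : u0 ∉ A) :
    discDeriv (fun T => if A ⊆ T ∧ T ⊆ B then (1 : ℝ) else 0) U S = 0 := by
  unfold discDeriv
  have hrw : U.powerset = (insert u0 (U.erase u0)).powerset := by
    rw [Finset.insert_erase hu0]
  rw [hrw, Finset.sum_powerset_insert (Finset.notMem_erase u0 U), ← Finset.sum_add_distrib]
  apply Finset.sum_eq_zero
  intro L hL
  rw [Finset.mem_powerset] at hL
  have hu0L : u0 ∉ L := fun h => Finset.notMem_erase u0 U (hL h)
  have hLU : L ⊆ U := hL.trans (Finset.erase_subset u0 U)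
  have hcard : (insert u0 L).card = L.card + 1 := Finset.card_insert_of_notMem hu0L
  have hν : (if A ⊆ S ∪ insert u0 L ∧ S ∪ insert u0 L ⊆ B then (1:ℝ) else 0)
      = (if A ⊆ S ∪ L ∧ S ∪ L ⊆ B then (1:ℝ) else 0) := by
    have h1 : S ∪ insert u0 L = insert u0 (S ∪ L) := by
      rw [Finset.union_insert]
    rw [h1]
    congr 1
    simp only [eq_iff_iff]
    constructor
    · rintro ⟨h2, h3⟩
      refine ⟨fun x hx => ?_, fun x hx => h3 (Finset.mem_insert_of_mem hx)⟩
      rcases Finset.mem_insert.mp (h2 hx) with h | h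
      · exact absurd (h ▸ hx) hA
      · exact h
    · rintro ⟨h2, h3⟩
      refine ⟨h2.trans (Finset.subset_insert _ _), fun x hx => ?_⟩
      rcases Finset.mem_insert.mp hx with h | h
      · exact h ▸ hB
      · exact h3 h
  simp only [hν, hcard]
  rw [← add_mul]
  have hlt : L.card < U.card := Finset.card_lt_card
    (Finset.ssubset_iff_of_subset hLU |>.mpr ⟨u0, hu0, hu0L⟩)
  have hexp : U.card - L.card = (U.card - (L.card + 1)) + 1 := by omega
  rw [hexp, pow_succ]
  ring_nf

lemma discDeriv_value {d : ℕ} (A B : Finset (Fin d)) (hAB : A ⊆ B) (U S : Finset (Fin d))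
    (hUsub : U ∩ B ⊆ A) (hS : Disjoint S U) :
    discDeriv (fun T => if A ⊆ T ∧ T ⊆ B then (1 : ℝ) else 0) U S =
      if A \ U ⊆ S ∧ S ⊆ B then (-1 : ℝ) ^ (U \ A).card else 0 := by
  unfold discDeriv
  have key : ∀ L ∈ U.powerset,
      (-1 : ℝ) ^ (U.card - L.card) * (if A ⊆ S ∪ L ∧ S ∪ L ⊆ B then (1:ℝ) else 0)
      = (-1 : ℝ) ^ (U.card - L.card) *
          (if L = A ∩ U ∧ (A \ U ⊆ S ∧ S ⊆ B) then (1:ℝ) else 0) := by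
    intro L hL
    rw [Finset.mem_powerset] at hL
    congr 1
    congr 1
    simp only [eq_iff_iff]
    constructor
    · rintro ⟨h1, h2⟩
      have hLeq : L = A ∩ U := by
        apply Finset.Subset.antisymm
        · intro x hx
          exact Finset.mem_inter.mpr ⟨hUsub (Finset.mem_inter.mpr ⟨hL hx,
              h2 (Finset.mem_union_right _ hx)⟩), hL hx⟩
        · intro x hx
          rcases Finset.mem_inter.mp hx with ⟨hxA, hxU⟩
          rcases Finset.mem_union.mp (h1 hxA) with h | h
          · exact absurd hxU (Finset.disjoint_left.mp hS h)
          · exact h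
      refine ⟨hLeq, fun x hx => ?_, fun x hx => h2 (Finset.mem_union_left _ hx)⟩
      rcases Finset.mem_sdiff.mp hx with ⟨hxA, hxU⟩
      rcases Finset.mem_union.mp (h1 hxA) with h | h
      · exact h
      · exact absurd (hL h) hxU
    · rintro ⟨h1, h2, h3⟩
      subst h1
      constructor
      · intro x hx
        by_cases hxU : x ∈ U
        · exact Finset.mem_union_right _ (Finset.mem_inter.mpr ⟨hx, hxU⟩)
        · exact Finset.mem_union_left _ (h2 (Finset.mem_sdiff.mpr ⟨hx, hxU⟩))
      · intro x hx
        rcases Finset.mem_union.mp hx with h | h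
        · exact h3 h
        · exact hAB (Finset.mem_inter.mp h).1
  rw [Finset.sum_congr rfl key]
  by_cases hc : A \ U ⊆ S ∧ S ⊆ B
  · simp only [hc, and_true, if_pos]
    rw [Finset.sum_eq_single_of_mem (A ∩ U)
      (Finset.mem_powerset.mpr Finset.inter_subset_right)]
    · rw [if_pos rfl, mul_one]
      congr 1
      have : (U \ A).card = U.card - (U ∩ A).card := by
        have := Finset.card_sdiff_add_card_inter U A
        omega
      rw [this, Finset.inter_comm]
    · intro L _ hne
      rw [if_neg hne, mul_zero]
  · simp only [hc, and_false, if_false, mul_zero, Finset.sum_const_zero, if_neg hc]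

/-- Shapley interaction index of the interval indicator game `ν(S) = 1[A ⊆ S ⊆ B]`. -/
theorem stmt15 (d : ℕ) (A B : Finset (Fin d)) (hAB : A ⊆ B)
    (U : Finset (Fin d)) (hU : U.Nonempty) :
    interIdx (fun S : Finset (Fin d) => if A ⊆ S ∧ S ⊆ B then (1 : ℝ) else 0) U =
      if U ⊆ A ∪ (Finset.univ \ B) then
        (-1 : ℝ) ^ (U ∩ (Finset.univ \ B)).card *
          omegaW (A.card - (B ∩ U).card) (Finset.univ \ (B ∪ U)).card
      else 0 := by
  by_cases h : U ⊆ A ∪ (Finset.univ \ B)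
  case neg =>
    rw [if_neg h]
    obtain ⟨u0, hu0U, hu0⟩ := Finset.not_subset.mp h
    have hu0B : u0 ∈ B := by
      by_contra hB
      exact hu0 (Finset.mem_union_right _ (Finset.mem_sdiff.mpr ⟨Finset.mem_univ _, hB⟩))
    have hu0A : u0 ∉ A := fun hA => hu0 (Finset.mem_union_left _ hA)
    unfold interIdx
    apply Finset.sum_eq_zero
    intro S _
    rw [discDeriv_vanish A B U S u0 hu0U hu0B hu0A, zero_mul]
  case pos =>
    rw [if_pos h]
    have hUsub : U ∩ B ⊆ A := by
      intro x hx
      rcases Finset.mem_inter.mp hx with ⟨hxU, hxB⟩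
      rcases Finset.mem_union.mp (h hxU) with hA | hC
      · exact hA
      · exact absurd hxB (Finset.mem_sdiff.mp hC).2
    set a := (A \ U).card with ha
    set m := (B \ A).card with hm
    set b := (Finset.univ \ (B ∪ U)).card with hb
    set u := U.card with hu'
    -- partition of univ \ U
    have hpart : Finset.univ \ U = (A \ U) ∪ ((B \ A) ∪ (Finset.univ \ (B ∪ U))) := by
      ext x
      have h1 : x ∈ U → x ∈ B → x ∈ A := fun hx hx' =>
        hUsub (Finset.mem_inter.mpr ⟨hx, hx'⟩)
      have h2 : x ∈ A → x ∈ B := fun hx => hAB hx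
      simp only [Finset.mem_sdiff, Finset.mem_union, Finset.mem_univ, true_and]
      tauto
    have hdisj1 : Disjoint (A \ U) ((B \ A) ∪ (Finset.univ \ (B ∪ U))) := by
      rw [Finset.disjoint_left]
      intro x hx hx'
      have h2 : x ∈ A → x ∈ B := fun hx => hAB hx
      simp only [Finset.mem_sdiff, Finset.mem_union, Finset.mem_univ, true_and] at hx hx'
      tauto
    have hdisj2 : Disjoint (B \ A) (Finset.univ \ (B ∪ U)) := by
      rw [Finset.disjoint_left]
      intro x hx hx'
      simp only [Finset.mem_sdiff, Finset.mem_union, Finset.mem_univ, true_and] at hx hx'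
      tauto
    have hcardsum : d - u = a + (m + b) := by
      have : (Finset.univ \ U).card = d - u := by
        rw [Finset.card_univ_diff, Fintype.card_fin]
      rw [← this, hpart, Finset.card_union_of_disjoint hdisj1,
        Finset.card_union_of_disjoint hdisj2]
    -- compute the index
    unfold interIdx
    have step1 : ∀ S ∈ (Finset.univ \ U).powerset,
        discDeriv (fun T => if A ⊆ T ∧ T ⊆ B then (1:ℝ) else 0) U S * pInt d u S.card
        = if A \ U ⊆ S ∧ S ⊆ B
            then (-1 : ℝ) ^ (U \ A).card * pInt d u S.card else 0 := by
      intro S hS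
      rw [Finset.mem_powerset] at hS
      have hdisj : Disjoint S U := by
        rw [Finset.disjoint_left]
        intro x hx
        exact (Finset.mem_sdiff.mp (hS hx)).2
      rw [discDeriv_value A B hAB U S hUsub hdisj, ite_mul, zero_mul]
    rw [Finset.sum_congr rfl step1, Finset.sum_ite, Finset.sum_const_zero, add_zero]
    -- reindex by T = S \ A
    have step2 : ∑ S ∈ (Finset.univ \ U).powerset.filter (fun S => A \ U ⊆ S ∧ S ⊆ B),
          (-1 : ℝ) ^ (U \ A).card * pInt d u S.card
        = ∑ T ∈ (B \ A).powerset, (-1 : ℝ) ^ (U \ A).card * pInt d u (a + T.card) := by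
      apply Finset.sum_nbij' (fun S => S \ A) (fun T => (A \ U) ∪ T)
      · intro S hS
        simp only [Finset.mem_filter, Finset.mem_powerset] at hS
        obtain ⟨hSU, hAS, hSB⟩ := hS
        exact Finset.mem_powerset.mpr (Finset.sdiff_subset_sdiff hSB le_rfl)
      · intro T hT
        rw [Finset.mem_powerset] at hT
        simp only [Finset.mem_filter, Finset.mem_powerset]
        refine ⟨Finset.union_subset ?_ ?_, Finset.subset_union_left, Finset.union_subset
          ((Finset.sdiff_subset).trans hAB) (hT.trans Finset.sdiff_subset)⟩
        · intro x hx
          rcases Finset.mem_sdiff.mp hx with ⟨hxA, hxU⟩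
          exact Finset.mem_sdiff.mpr ⟨Finset.mem_univ _, hxU⟩
        · intro x hx
          rcases Finset.mem_sdiff.mp (hT hx) with ⟨hxB, hxA⟩
          refine Finset.mem_sdiff.mpr ⟨Finset.mem_univ _, fun hxU => ?_⟩
          exact hxA (hUsub (Finset.mem_inter.mpr ⟨hxU, hxB⟩))
      · intro S hS
        simp only [Finset.mem_filter, Finset.mem_powerset] at hS
        obtain ⟨hSU, hAS, hSB⟩ := hS
        ext x
        simp only [Finset.mem_union, Finset.mem_sdiff]
        constructor
        · rintro (⟨hxA, hxU⟩ | ⟨hxS, _⟩)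
          · exact hAS (Finset.mem_sdiff.mpr ⟨hxA, hxU⟩)
          · exact hxS
        · intro hxS
          by_cases hxA : x ∈ A
          · exact Or.inl ⟨hxA, (Finset.mem_sdiff.mp (hSU hxS)).2⟩
          · exact Or.inr ⟨hxS, hxA⟩
      · intro T hT
        rw [Finset.mem_powerset] at hT
        ext x
        simp only [Finset.mem_union, Finset.mem_sdiff]
        constructor
        · rintro ⟨hxA | hxT, hxnA⟩
          · exact absurd hxA.1 hxnA
          · exact hxT
        · intro hxT
          exact ⟨Or.inr hxT, (Finset.mem_sdiff.mp (hT hxT)).2⟩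
      · intro S hS
        simp only [Finset.mem_filter, Finset.mem_powerset] at hS
        obtain ⟨hSU, hAS, hSB⟩ := hS
        congr 2
        have hSA : S ∩ A = A \ U := by
          ext x
          simp only [Finset.mem_inter, Finset.mem_sdiff]
          constructor
          · rintro ⟨hxS, hxA⟩
            exact ⟨hxA, (Finset.mem_sdiff.mp (hSU hxS)).2⟩
          · intro hx
            exact ⟨hAS (Finset.mem_sdiff.mpr hx), hx.1⟩
        have := Finset.card_sdiff_add_card_inter S A
        rw [hSA] at this
        omega
    rw [step2]
    -- group by cardinality
    rw [sum_powerset_card (B \ A) (fun k => (-1 : ℝ) ^ (U \ A).card * pInt d u (a + k))]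
    have step3 : ∀ k ∈ Finset.range (m + 1),
        (m.choose k : ℝ) * ((-1 : ℝ) ^ (U \ A).card * pInt d u (a + k))
        = (-1 : ℝ) ^ (U \ A).card * ((m.choose k : ℝ) * omegaW (a + k) (b + (m - k))) := by
      intro k hk
      rw [Finset.mem_range] at hk
      have hpω : pInt d u (a + k) = omegaW (a + k) (b + (m - k)) := by
        unfold pInt omegaW
        have h1 : (a + k) + (b + (m - k)) = d - u := by omega
        rw [h1]
      rw [hpω]
      ring
    rw [Finset.sum_congr rfl step3, ← Finset.mul_sum, sum_choose_omegaW m a b]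
    -- final bookkeeping
    have e1 : U ∩ (Finset.univ \ B) = U \ A := by
      ext x
      have h1 : x ∈ U → x ∉ B → x ∉ A := fun _ hxB hxA => hxB (hAB hxA)
      have h2 : x ∈ U → x ∉ A → x ∉ B := fun hxU hxA hxB =>
        hxA (hUsub (Finset.mem_inter.mpr ⟨hxU, hxB⟩))
      simp only [Finset.mem_inter, Finset.mem_sdiff, Finset.mem_univ, true_and]
      tauto
    have e2 : A.card - (B ∩ U).card = a := by
      have hBU : B ∩ U = A ∩ U := by
        ext x
        simp only [Finset.mem_inter]
        constructor
        · rintro ⟨hxB, hxU⟩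
          exact ⟨hUsub (Finset.mem_inter.mpr ⟨hxU, hxB⟩), hxU⟩
        · rintro ⟨hxA, hxU⟩
          exact ⟨hAB hxA, hxU⟩
      have := Finset.card_sdiff_add_card_inter A U
      rw [hBU]
      omega
    rw [e1, e2]
end
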